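/- For a bipodal graphon with parameters (a,b,c,d) and fixed edge density ε, the stationarity equations for the triangle density (∇τ = λ∇ε in the parameters a,b,c,d, with boundary conditions allowing d=1, b=0) at a triangle-density minimizer with d=1, b=0 reduce to the algebraic condition 0 = a³c² + ac² + 2a²c + 2(1−c) − 4a²c² − 4c(1−c) relating a and c. -/
import Mathlib


open Real Set

noncomputable section

/-- Edge density of the bipodal graphon with `d = 1`, `b = 0`:
`ε = c²a + 2c(1−c)`. -/
def Ebip (a c : ℝ) : ℝ := c ^ 2 * a + 2 * c * (1 - c)

/-- Triangle density of the bipodal graphon with `d = 1`, `b = 0`: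
`τ = c³a³ + 3c²(1−c)a`. -/
def Tbip (a c : ℝ) : ℝ := c ^ 3 * a ^ 3 + 3 * c ^ 2 * (1 - c) * a

lemma derivTa (a c : ℝ) :
    deriv (fun a' => Tbip a' c) a = 3 * c ^ 3 * a ^ 2 + 3 * c ^ 2 * (1 - c) := by
  have h : HasDerivAt (fun a' : ℝ => Tbip a' c)
      (c ^ 3 * (3 * a ^ 2) + 3 * c ^ 2 * (1 - c) * 1) a := by
    unfold Tbip
    exact (((hasDerivAt_pow 3 a).const_mul (c ^ 3)).add
      ((hasDerivAt_id a).const_mul (3 * c ^ 2 * (1 - c)))).congr_deriv (by ring)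
  rw [h.deriv]; ring

lemma derivEa (a c : ℝ) :
    deriv (fun a' => Ebip a' c) a = c ^ 2 := by
  have h : HasDerivAt (fun a' : ℝ => Ebip a' c) (c ^ 2) a := by
    unfold Ebip
    exact (((hasDerivAt_id a).const_mul (c ^ 2)).add_const _).congr_deriv (by ring)
  exact h.deriv

lemma derivTc (a c : ℝ) :
    deriv (fun c' => Tbip a c') c = 3 * c ^ 2 * a ^ 3 + (6 * c - 9 * c ^ 2) * a := by
  have h : HasDerivAt (fun c' : ℝ => Tbip a c')
      (3 * c ^ 2 * a ^ 3 + (6 * c - 9 * c ^ 2) * a) c := by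
    unfold Tbip
    have h1 : HasDerivAt (fun c' : ℝ => c' ^ 3 * a ^ 3) (3 * c ^ 2 * a ^ 3) c := by
      simpa using (hasDerivAt_pow 3 c).mul_const (a ^ 3)
    have h2 : HasDerivAt (fun c' : ℝ => 3 * c' ^ 2 * (1 - c') * a)
        ((6 * c - 9 * c ^ 2) * a) c := by
      have : HasDerivAt (fun c' : ℝ => 3 * c' ^ 2 * (1 - c'))
          (3 * (2 * c) * (1 - c) + 3 * c ^ 2 * (-1)) c := by
        exact (((hasDerivAt_pow 2 c).const_mul 3).mul
          ((hasDerivAt_id c).const_sub 1)).congr_deriv (by simp only [id_eq]; ring)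
      simpa using (this.mul_const a).congr_deriv (by ring)
    exact h1.add h2
  exact h.deriv

lemma derivEc (a c : ℝ) :
    deriv (fun c' => Ebip a c') c = 2 * c * a + 2 - 4 * c := by
  have h : HasDerivAt (fun c' : ℝ => Ebip a c') (2 * c * a + 2 - 4 * c) c := by
    unfold Ebip
    have h1 : HasDerivAt (fun c' : ℝ => c' ^ 2 * a) (2 * c * a) c := by
      simpa using (hasDerivAt_pow 2 c).mul_const a
    have h2 : HasDerivAt (fun c' : ℝ => 2 * c' * (1 - c')) (2 * (1 - c) + 2 * c * (-1)) c := by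
      exact (((hasDerivAt_id c).const_mul 2).mul
        ((hasDerivAt_id c).const_sub 1)).congr_deriv (by simp only [id_eq]; ring)
    exact (h1.add h2).congr_deriv (by ring)
  exact h.deriv

theorem bipodal_stationarity_condition (a c lam : ℝ)
    (ha : a ∈ Set.Icc (0:ℝ) 1) (hc : c ∈ Set.Ioo (0:ℝ) 1)
    (hstata : deriv (fun a' => Tbip a' c) a = lam * deriv (fun a' => Ebip a' c) a)
    (hstatc : deriv (fun c' => Tbip a c') c = lam * deriv (fun c' => Ebip a c') c) :
    0 = a ^ 3 * c ^ 2 + a * c ^ 2 + 2 * a ^ 2 * c + 2 * (1 - c)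
        - 4 * a ^ 2 * c ^ 2 - 4 * c * (1 - c) := by
  rw [derivTa, derivEa] at hstata
  rw [derivTc, derivEc] at hstatc
  have hc0 : c ≠ 0 := ne_of_gt hc.1
  have hlam : lam = 3 * c * a ^ 2 + 3 * (1 - c) := by
    have h : c ^ 2 * (lam - (3 * c * a ^ 2 + 3 * (1 - c))) = 0 := by linarith [hstata]
    have := mul_eq_zero.mp h
    rcases this with h' | h'
    · exact absurd h' (pow_ne_zero 2 hc0)
    · linarith
  subst hlam
  nlinarith [hstatc, sq_nonneg c, hc.1]
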